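/- arXiv:2406.01378 — 5 statements merged into one kernel-verified Lean document; each statement's English description precedes it below -/
import Mathlib

section
/- Let p, p' be probability mass functions on a finite set X with p(x), p'(x) > 0 for all x, let N be a positive integer and ε > 0. Then P_{D∼p^{⊗N}}( Σ_{i=1}^N [ −log(p(X_i)/p'(X_i)) ] + N·H²(p, p') ≥ ε ) ≤ exp(−ε/2), where D = (X_1,…,X_N). -/
open scoped Classical

/-! With `L(D) = ∑ᵢ -log (p Xᵢ / p' Xᵢ)`, Markov's inequality for `exp ((L + N H²) / 2)`
bounds the probability by `exp (-ε / 2)` times its expectation. The expectation factorizes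
over the `N` samples, and each factor is `∑ₓ √(p x p' x) · exp (H² / 2) = B · exp (1 - B) ≤ 1`,
because `H² = 2 - 2B` for the Bhattacharyya coefficient `B` and `B ≤ exp (B - 1)`. -/

open Real Finset

theorem sum_filter_le_exp_neg_mul_sum_mul_exp {ι : Type*} (s : Finset ι) {w : ι → ℝ}
    (hw : ∀ i ∈ s, 0 ≤ w i) (f : ι → ℝ) (c : ℝ) {t : ℝ} (ht : 0 ≤ t) :
    ∑ i ∈ s with c ≤ f i, w i ≤ exp (-(t * c)) * ∑ i ∈ s, w i * exp (t * f i) := by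
  rw [mul_sum]
  calc ∑ i ∈ s with c ≤ f i, w i
      ≤ ∑ i ∈ s with c ≤ f i, exp (-(t * c)) * (w i * exp (t * f i)) := by
        refine sum_le_sum fun i hi ↦ ?_
        obtain ⟨his, hci⟩ := mem_filter.mp hi
        have hexp : 1 ≤ exp (-(t * c)) * exp (t * f i) := by
          rw [← exp_add, one_le_exp_iff]
          linarith [mul_le_mul_of_nonneg_left hci ht]
        calc w i ≤ w i * (exp (-(t * c)) * exp (t * f i)) :=
              le_mul_of_one_le_right (hw i his) hexp
          _ = _ := by ring
    _ ≤ ∑ i ∈ s, exp (-(t * c)) * (w i * exp (t * f i)) :=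
        sum_le_sum_of_subset_of_nonneg (filter_subset _ _) fun i hi _ ↦
          mul_nonneg (exp_pos _).le (mul_nonneg (hw i hi) (exp_pos _).le)

noncomputable section

variable {X : Type*} [Fintype X]

def bhattacharyya (p q : X → ℝ) : ℝ := ∑ x, √(p x * q x)

def hellingerSq (p q : X → ℝ) : ℝ := ∑ x, (√(p x) - √(q x)) ^ 2

theorem hellingerSq_eq_two_sub_two_mul_bhattacharyya {p q : X → ℝ}
    (hp : ∀ x, 0 ≤ p x) (hq : ∀ x, 0 ≤ q x) (hp1 : ∑ x, p x = 1) (hq1 : ∑ x, q x = 1) :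
    hellingerSq p q = 2 - 2 * bhattacharyya p q := by
  have hterm : ∀ x, (√(p x) - √(q x)) ^ 2 = p x + q x - 2 * √(p x * q x) := fun x ↦ by
    rw [sub_sq, sq_sqrt (hp x), sq_sqrt (hq x), sqrt_mul (hp x)]
    ring
  simp only [hellingerSq, bhattacharyya, hterm, sum_sub_distrib, sum_add_distrib, ← mul_sum,
    hp1, hq1]
  ring

theorem bhattacharyya_mul_exp_half_hellingerSq_le_one {p q : X → ℝ}
    (hp : ∀ x, 0 ≤ p x) (hq : ∀ x, 0 ≤ q x) (hp1 : ∑ x, p x = 1) (hq1 : ∑ x, q x = 1) :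
    bhattacharyya p q * exp (hellingerSq p q / 2) ≤ 1 := by
  rw [hellingerSq_eq_two_sub_two_mul_bhattacharyya hp hq hp1 hq1]
  set B := bhattacharyya p q
  have hB : B ≤ exp (B - 1) := by linarith [add_one_le_exp (B - 1)]
  calc B * exp ((2 - 2 * B) / 2) = B * exp (1 - B) := by ring_nf
    _ ≤ exp (B - 1) * exp (1 - B) := by gcongr
    _ = 1 := by rw [← exp_add]; simp

theorem mul_exp_neg_log_div_div_two {a b : ℝ} (ha : 0 < a) (hb : 0 < b) :
    a * exp (-log (a / b) / 2) = √(a * b) := by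
  have hlog : -log (a / b) / 2 = log (√(b / a)) := by
    rw [log_sqrt (by positivity), log_div hb.ne' ha.ne', log_div ha.ne' hb.ne']
    ring
  rw [hlog, exp_log (by positivity), ← sqrt_sq ha.le, ← sqrt_mul (sq_nonneg a), sqrt_sq ha.le]
  congr 1
  field_simp

theorem sum_mul_exp_half_neg_log_div_add_hellingerSq_le_one {p q : X → ℝ}
    (hp : ∀ x, 0 < p x) (hq : ∀ x, 0 < q x) (hp1 : ∑ x, p x = 1) (hq1 : ∑ x, q x = 1) :
    ∑ x, p x * exp ((-log (p x / q x) + hellingerSq p q) / 2) ≤ 1 := by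
  have hterm : ∀ x, p x * exp ((-log (p x / q x) + hellingerSq p q) / 2)
      = √(p x * q x) * exp (hellingerSq p q / 2) := fun x ↦ by
    rw [add_div, exp_add, ← mul_assoc, mul_exp_neg_log_div_div_two (hp x) (hq x)]
  simp only [hterm, ← sum_mul]
  exact bhattacharyya_mul_exp_half_hellingerSq_le_one (fun x ↦ (hp x).le) (fun x ↦ (hq x).le)
    hp1 hq1

end

theorem chernoff_likelihood_hellinger_general
    {X : Type*} [Fintype X] (p p' : X → ℝ) (N : ℕ)
    (ε : ℝ)
    (hp : ∀ x, 0 < p x) (hp' : ∀ x, 0 < p' x)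
    (hp1 : ∑ x, p x = 1) (hp'1 : ∑ x, p' x = 1) :
    ∑ D ∈ Finset.univ.filter (fun D : Fin N → X =>
        ε ≤ (∑ i, -Real.log (p (D i) / p' (D i)))
              + N * ∑ x, (Real.sqrt (p x) - Real.sqrt (p' x)) ^ 2),
      ∏ i, p (D i) ≤ Real.exp (-ε / 2) := by
  rw [show ∑ x, (√(p x) - √(p' x)) ^ 2 = hellingerSq p p' from rfl]
  set H := hellingerSq p p'
  have htensor : ∀ D : Fin N → X,
      (∏ i, p (D i)) * exp (1 / 2 * ((∑ i, -log (p (D i) / p' (D i))) + N * H))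
        = ∏ i, p (D i) * exp ((-log (p (D i) / p' (D i)) + H) / 2) := fun D ↦ by
    rw [prod_mul_distrib, ← exp_sum, ← sum_div, sum_add_distrib]
    simp only [sum_const, card_univ, Fintype.card_fin, nsmul_eq_mul]
    ring_nf
  have hchernoff := sum_filter_le_exp_neg_mul_sum_mul_exp (univ : Finset (Fin N → X))
    (w := fun D ↦ ∏ i, p (D i)) (fun D _ ↦ prod_nonneg fun i _ ↦ (hp _).le)
    (fun D ↦ (∑ i, -log (p (D i) / p' (D i))) + N * H) ε (t := 1 / 2) (by norm_num)
  calc _ ≤ _ := hchernoff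
    _ = exp (-ε / 2) * (∑ x, p x * exp ((-log (p x / p' x) + H) / 2)) ^ N := by
        rw [Fintype.sum_pow, ← sum_congr rfl fun D _ ↦ htensor D]
        congr 2
        ring
    _ ≤ exp (-ε / 2) := mul_le_of_le_one_right (exp_pos _).le
        (pow_le_one₀ (sum_nonneg fun x _ ↦ mul_nonneg (hp x).le (exp_pos _).le)
          (sum_mul_exp_half_neg_log_div_add_hellingerSq_le_one hp hp' hp1 hp'1))

theorem chernoff_likelihood_hellinger
    {X : Type*} [Fintype X] (p p' : X → ℝ) (N : ℕ) (hN : 0 < N)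
    (ε : ℝ) (hε : 0 < ε)
    (hp : ∀ x, 0 < p x) (hp' : ∀ x, 0 < p' x)
    (hp1 : ∑ x, p x = 1) (hp'1 : ∑ x, p' x = 1) :
    ∑ D ∈ Finset.univ.filter (fun D : Fin N → X =>
        ε ≤ (∑ i, -Real.log (p (D i) / p' (D i)))
              + N * ∑ x, (Real.sqrt (p x) - Real.sqrt (p' x)) ^ 2),
      ∏ i, p (D i) ≤ Real.exp (-ε / 2) :=
  chernoff_likelihood_hellinger_general p p' N ε hp hp' hp1 hp'1
end

section
/- Let p, p' be strictly positive probability mass functions on a product X₁ × X₂ of finite sets, with conditionals p(x₂|x₁) = p(x₁,x₂)/p(x₁) (and similarly for p'). For N i.i.d. pairs D = ((X_{1,i}, X_{2,i}))_{i∈[N]} drawn from p, and any ε > 0: P( Σ_{i=1}^N [ −log(p(X_{2,i}|X_{1,i})/p'(X_{2,i}|X_{1,i})) + E_{X₁'∼p}[H²(p(·|X₁'), p'(·|X₁'))] ] ≥ ε ) ≤ exp(−ε/2). Note the Hellinger term here equals N times the p-average over X₁' of the squared Hellinger distance between conditional distributions. -/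
open scoped Classical

lemma chernoff_aux {Z : Type*} [Fintype Z] (p f : Z → ℝ) (N : ℕ) (ε : ℝ)
    (hp0 : ∀ z, 0 ≤ p z)
    (hsum : ∑ z, p z * Real.exp (f z / 2) ≤ 1) :
    ∑ D ∈ Finset.univ.filter (fun D : Fin N → Z => ε ≤ ∑ i, f (D i)),
      ∏ i, p (D i) ≤ Real.exp (-ε / 2) := by
  classical
  have key : ∀ D : Fin N → Z, ε ≤ ∑ i, f (D i) →
      ∏ i, p (D i) ≤ Real.exp (-ε / 2) * ∏ i, (p (D i) * Real.exp (f (D i) / 2)) := by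
    intro D hD
    have h1 : ∏ i, (p (D i) * Real.exp (f (D i) / 2))
        = (∏ i, p (D i)) * Real.exp ((∑ i, f (D i)) / 2) := by
      rw [Finset.prod_mul_distrib, ← Real.exp_sum, Finset.sum_div]
    rw [h1]
    have h2 : (1 : ℝ) ≤ Real.exp (-ε / 2) * Real.exp ((∑ i, f (D i)) / 2) := by
      rw [← Real.exp_add]
      have h3 : (0 : ℝ) ≤ -ε / 2 + (∑ i, f (D i)) / 2 := by linarith
      simpa using Real.one_le_exp h3
    calc ∏ i, p (D i) = 1 * ∏ i, p (D i) := (one_mul _).symm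
      _ ≤ (Real.exp (-ε / 2) * Real.exp ((∑ i, f (D i)) / 2)) * ∏ i, p (D i) :=
          mul_le_mul_of_nonneg_right h2 (Finset.prod_nonneg fun i _ => hp0 _)
      _ = Real.exp (-ε / 2) * ((∏ i, p (D i)) * Real.exp ((∑ i, f (D i)) / 2)) := by ring
  calc ∑ D ∈ Finset.univ.filter (fun D : Fin N → Z => ε ≤ ∑ i, f (D i)), ∏ i, p (D i)
      ≤ ∑ D ∈ Finset.univ.filter (fun D : Fin N → Z => ε ≤ ∑ i, f (D i)),
          Real.exp (-ε / 2) * ∏ i, (p (D i) * Real.exp (f (D i) / 2)) :=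
        Finset.sum_le_sum fun D hD => key D (Finset.mem_filter.mp hD).2
    _ ≤ ∑ D : Fin N → Z, Real.exp (-ε / 2) * ∏ i, (p (D i) * Real.exp (f (D i) / 2)) :=
        Finset.sum_le_sum_of_subset_of_nonneg (Finset.filter_subset _ _)
          (fun D _ _ => mul_nonneg (Real.exp_nonneg _)
            (Finset.prod_nonneg fun i _ => mul_nonneg (hp0 _) (Real.exp_nonneg _)))
    _ = Real.exp (-ε / 2) * ∑ D : Fin N → Z, ∏ i, (p (D i) * Real.exp (f (D i) / 2)) := by
        rw [← Finset.mul_sum]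
    _ = Real.exp (-ε / 2) * (∑ z, p z * Real.exp (f z / 2)) ^ N := by
        rw [Fintype.sum_pow]
    _ ≤ Real.exp (-ε / 2) * 1 := by
        refine mul_le_mul_of_nonneg_left ?_ (Real.exp_nonneg _)
        exact pow_le_one₀ (Finset.sum_nonneg fun z _ =>
          mul_nonneg (hp0 _) (Real.exp_nonneg _)) hsum
    _ = Real.exp (-ε / 2) := mul_one _

theorem chernoff_conditional_likelihood_hellinger
    {X₁ X₂ : Type*} [Fintype X₁] [Fintype X₂]
    (p p' : X₁ × X₂ → ℝ) (N : ℕ) (hN : 0 < N) (ε : ℝ) (hε : 0 < ε)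
    (hp : ∀ z, 0 < p z) (hp' : ∀ z, 0 < p' z)
    (hp1 : ∑ z, p z = 1) (hp'1 : ∑ z, p' z = 1) :
    -- conditional: p (x₁, x₂) / marginal, marginal x₁ = ∑ y, p (x₁, y)
    ∑ D ∈ Finset.univ.filter (fun D : Fin N → X₁ × X₂ =>
        ε ≤ ∑ i,
          (-Real.log ((p (D i) / ∑ y, p ((D i).1, y))
                      / (p' (D i) / ∑ y, p' ((D i).1, y)))
           + ∑ x₁, (∑ y, p (x₁, y)) *
              ∑ x₂, (Real.sqrt (p (x₁, x₂) / ∑ y, p (x₁, y))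
                     - Real.sqrt (p' (x₁, x₂) / ∑ y, p' (x₁, y))) ^ 2)),
      ∏ i, p (D i) ≤ Real.exp (-ε / 2) := by
  classical
  -- nonemptiness
  have hne : Nonempty (X₁ × X₂) := by
    by_contra h
    rw [not_nonempty_iff] at h
    rw [Finset.univ_eq_empty, Finset.sum_empty] at hp1
    exact one_ne_zero hp1.symm
  obtain ⟨⟨a₁, a₂⟩⟩ := hne
  have hX2 : Nonempty X₂ := ⟨a₂⟩
  have hmpos : ∀ x₁ : X₁, 0 < ∑ y, p (x₁, y) := fun x₁ =>
    Finset.sum_pos (fun y _ => hp _) Finset.univ_nonempty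
  have hm'pos : ∀ x₁ : X₁, 0 < ∑ y, p' (x₁, y) := fun x₁ =>
    Finset.sum_pos (fun y _ => hp' _) Finset.univ_nonempty
  -- conditionals
  set q : X₁ × X₂ → ℝ := fun z => p z / ∑ y, p (z.1, y) with hqdef
  set q' : X₁ × X₂ → ℝ := fun z => p' z / ∑ y, p' (z.1, y) with hq'def
  have hqpos : ∀ z, 0 < q z := fun z => div_pos (hp z) (hmpos z.1)
  have hq'pos : ∀ z, 0 < q' z := fun z => div_pos (hp' z) (hm'pos z.1)
  have hqsum : ∀ x₁, ∑ x₂, q (x₁, x₂) = 1 := by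
    intro x₁
    simp only [hqdef, div_eq_mul_inv, ← Finset.sum_mul]
    exact mul_inv_cancel₀ (hmpos x₁).ne'
  have hq'sum : ∀ x₁, ∑ x₂, q' (x₁, x₂) = 1 := by
    intro x₁
    simp only [hq'def, div_eq_mul_inv, ← Finset.sum_mul]
    exact mul_inv_cancel₀ (hm'pos x₁).ne'
  set C : ℝ := ∑ x₁, (∑ y, p (x₁, y)) *
      ∑ x₂, (Real.sqrt (q (x₁, x₂)) - Real.sqrt (q' (x₁, x₂))) ^ 2 with hCdef
  have hC0 : 0 ≤ C := Finset.sum_nonneg fun x₁ _ =>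
    mul_nonneg (hmpos x₁).le (Finset.sum_nonneg fun x₂ _ => sq_nonneg _)
  -- the key sum bound
  have hsum : ∑ z, p z * Real.exp ((-Real.log (q z / q' z) + C) / 2) ≤ 1 := by
    have hterm : ∀ z : X₁ × X₂, p z * Real.exp ((-Real.log (q z / q' z) + C) / 2)
        = Real.exp (C / 2) * ((∑ y, p (z.1, y)) * Real.sqrt (q z * q' z)) := by
      intro z
      have hr : 0 < q z / q' z := div_pos (hqpos z) (hq'pos z)
      have h1 : Real.exp ((-Real.log (q z / q' z) + C) / 2)
          = Real.exp (C / 2) * Real.sqrt (q' z / q z) := by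
        rw [show (-Real.log (q z / q' z) + C) / 2
            = C / 2 + (-Real.log (q z / q' z)) / 2 by ring, Real.exp_add]
        congr 1
        rw [← Real.log_inv, inv_div, ← Real.log_sqrt (div_nonneg (hq'pos z).le (hqpos z).le)]
        exact Real.exp_log (Real.sqrt_pos.mpr (div_pos (hq'pos z) (hqpos z)))
      rw [h1]
      have h2 : p z * Real.sqrt (q' z / q z) = (∑ y, p (z.1, y)) * Real.sqrt (q z * q' z) := by
        have hp2 : p z = (∑ y, p (z.1, y)) * q z := by
          simp only [hqdef]
          rw [mul_comm, div_mul_cancel₀ (p z) (hmpos z.1).ne']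
        rw [hp2, mul_assoc]
        congr 1
        rw [Real.sqrt_div (hq'pos z).le, Real.sqrt_mul (hqpos z).le,
          mul_div_assoc', mul_comm (q z), mul_div_assoc, Real.div_sqrt, mul_comm]
      rw [← mul_assoc, mul_comm (p z), mul_assoc, h2]
    rw [Finset.sum_congr rfl fun z _ => hterm z, ← Finset.mul_sum]
    have hsplit : ∑ z : X₁ × X₂, (∑ y, p (z.1, y)) * Real.sqrt (q z * q' z)
        = ∑ x₁, (∑ y, p (x₁, y)) * ∑ x₂, Real.sqrt (q (x₁, x₂) * q' (x₁, x₂)) := by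
      rw [Fintype.sum_prod_type]
      exact Finset.sum_congr rfl fun x₁ _ => by rw [Finset.mul_sum]
    rw [hsplit]
    -- per-x₁ identity: ∑ (√q - √q')² = 2 - 2 ∑ √(q q')
    have hH : ∀ x₁, ∑ x₂, (Real.sqrt (q (x₁, x₂)) - Real.sqrt (q' (x₁, x₂))) ^ 2
        = 2 - 2 * ∑ x₂, Real.sqrt (q (x₁, x₂) * q' (x₁, x₂)) := by
      intro x₁
      have : ∀ x₂, (Real.sqrt (q (x₁, x₂)) - Real.sqrt (q' (x₁, x₂))) ^ 2
          = q (x₁, x₂) + q' (x₁, x₂) - 2 * Real.sqrt (q (x₁, x₂) * q' (x₁, x₂)) := by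
        intro x₂
        rw [sub_sq, Real.sq_sqrt (hqpos _).le, Real.sq_sqrt (hq'pos _).le,
          Real.sqrt_mul (hqpos _).le]
        ring
      rw [Finset.sum_congr rfl fun x₂ _ => this x₂]
      rw [Finset.sum_sub_distrib, Finset.sum_add_distrib, hqsum, hq'sum, ← Finset.mul_sum]
      ring
    -- marginal sums to 1
    have hmarg : ∑ x₁, ∑ y, p (x₁, y) = 1 := by
      rw [← Fintype.sum_prod_type]; exact hp1
    have hCeq : C = 2 - 2 * ∑ x₁, (∑ y, p (x₁, y)) *
        ∑ x₂, Real.sqrt (q (x₁, x₂) * q' (x₁, x₂)) := by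
      rw [hCdef]
      rw [Finset.sum_congr rfl fun x₁ _ => by rw [hH x₁]]
      have hexp : ∀ x₁ : X₁, (∑ y, p (x₁, y)) *
          (2 - 2 * ∑ x₂, Real.sqrt (q (x₁, x₂) * q' (x₁, x₂)))
          = 2 * (∑ y, p (x₁, y)) - 2 * ((∑ y, p (x₁, y)) *
            ∑ x₂, Real.sqrt (q (x₁, x₂) * q' (x₁, x₂))) := fun x₁ => by ring
      rw [Finset.sum_congr rfl fun x₁ _ => hexp x₁, Finset.sum_sub_distrib,
        ← Finset.mul_sum, ← Finset.mul_sum, hmarg]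
      ring
    have hB : ∑ x₁, (∑ y, p (x₁, y)) * ∑ x₂, Real.sqrt (q (x₁, x₂) * q' (x₁, x₂))
        = 1 - C / 2 := by linarith [hCeq]
    rw [hB]
    have h3 : 1 - C / 2 ≤ Real.exp (-(C / 2)) := by
      have := Real.add_one_le_exp (-(C / 2))
      linarith
    calc Real.exp (C / 2) * (1 - C / 2) ≤ Real.exp (C / 2) * Real.exp (-(C / 2)) :=
        mul_le_mul_of_nonneg_left h3 (Real.exp_nonneg _)
      _ = 1 := by rw [← Real.exp_add]; simp
  exact chernoff_aux p
    (fun z => -Real.log (q z / q' z) + C) N ε (fun z => (hp z).le) hsum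
end

section
/- Let μ and ν be probability mass functions on a finite set X, and let f : X → [0, B] be a bounded nonnegative function with B ≥ 0. Then E_{X∼μ}[f(X)] ≤ 3·E_{X∼ν}[f(X)] + 4B·H²(μ, ν), where H²(μ, ν) = Σ_x (√μ(x) − √ν(x))² is the squared Hellinger distance. -/
theorem hellinger_change_of_measure
    {X : Type*} [Fintype X] (μ ν f : X → ℝ) (B : ℝ) (hB : 0 ≤ B)
    (hμ : ∀ x, 0 ≤ μ x) (hν : ∀ x, 0 ≤ ν x)
    (hμ1 : ∑ x, μ x = 1) (hν1 : ∑ x, ν x = 1)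
    (hf0 : ∀ x, 0 ≤ f x) (hfB : ∀ x, f x ≤ B) :
    ∑ x, μ x * f x ≤ 3 * ∑ x, ν x * f x
      + 4 * B * ∑ x, (Real.sqrt (μ x) - Real.sqrt (ν x)) ^ 2 := by
  have key : ∀ x, μ x * f x ≤
      2 * (ν x * f x) + 2 * B * (Real.sqrt (μ x) - Real.sqrt (ν x)) ^ 2 := by
    intro x
    have hsμ : Real.sqrt (μ x) ^ 2 = μ x := Real.sq_sqrt (hμ x)
    have hsν : Real.sqrt (ν x) ^ 2 = ν x := Real.sq_sqrt (hν x)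
    have hμ2 : μ x ≤ 2 * (Real.sqrt (μ x) - Real.sqrt (ν x)) ^ 2 + 2 * ν x := by
      nlinarith [sq_nonneg (Real.sqrt (μ x) - 2 * Real.sqrt (ν x))]
    calc μ x * f x ≤ (2 * (Real.sqrt (μ x) - Real.sqrt (ν x)) ^ 2 + 2 * ν x) * f x :=
          mul_le_mul_of_nonneg_right hμ2 (hf0 x)
      _ ≤ 2 * (ν x * f x) + 2 * B * (Real.sqrt (μ x) - Real.sqrt (ν x)) ^ 2 := by
          have hfx := hfB x
          nlinarith [sq_nonneg (Real.sqrt (μ x) - Real.sqrt (ν x)), hf0 x]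
  have h1 : ∑ x, μ x * f x ≤
      ∑ x, (2 * (ν x * f x) + 2 * B * (Real.sqrt (μ x) - Real.sqrt (ν x)) ^ 2) :=
    Finset.sum_le_sum fun x _ => key x
  have hνf : 0 ≤ ∑ x, ν x * f x :=
    Finset.sum_nonneg fun x _ => mul_nonneg (hν x) (hf0 x)
  have hH : 0 ≤ ∑ x, (Real.sqrt (μ x) - Real.sqrt (ν x)) ^ 2 :=
    Finset.sum_nonneg fun x _ => sq_nonneg _
  rw [Finset.sum_add_distrib, ← Finset.mul_sum, ← Finset.mul_sum] at h1
  nlinarith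
end

section
/- Let (X₁, F₁) and (X₂, F₂) be finite measurable spaces. Let P and Q be probability distributions on X₁ × X₂ with first marginals P₁, Q₁ and conditional kernels P(·|x₁), Q(·|x₁). Then H²(P, Q) ≤ 2·H²(P₁, Q₁) + 2·E_{x₁∼P₁}[H²(P(·|x₁), Q(·|x₁))], a two-step chain-rule (subadditivity) bound for the squared Hellinger distance. -/
theorem hellinger_two_step_chain_rule
    {X₁ X₂ : Type*} [Fintype X₁] [Fintype X₂]
    (P Q : X₁ × X₂ → ℝ)
    (hP : ∀ z, 0 ≤ P z) (hQ : ∀ z, 0 ≤ Q z)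
    (hP1 : ∑ z, P z = 1) (hQ1 : ∑ z, Q z = 1) :
    ∑ z : X₁ × X₂, (Real.sqrt (P z) - Real.sqrt (Q z)) ^ 2
      ≤ 2 * ∑ x₁, (Real.sqrt (∑ y, P (x₁, y)) - Real.sqrt (∑ y, Q (x₁, y))) ^ 2
        + 2 * ∑ x₁, (∑ y, P (x₁, y)) *
            ∑ x₂, (Real.sqrt (P (x₁, x₂) / ∑ y, P (x₁, y))
                   - Real.sqrt (Q (x₁, x₂) / ∑ y, Q (x₁, y))) ^ 2 := by
  have key : ∀ x₁ : X₁,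
      ∑ y, (Real.sqrt (P (x₁, y)) - Real.sqrt (Q (x₁, y))) ^ 2
        ≤ 2 * (Real.sqrt (∑ y, P (x₁, y)) - Real.sqrt (∑ y, Q (x₁, y))) ^ 2
          + 2 * ((∑ y, P (x₁, y)) *
              ∑ x₂, (Real.sqrt (P (x₁, x₂) / ∑ y, P (x₁, y))
                     - Real.sqrt (Q (x₁, x₂) / ∑ y, Q (x₁, y))) ^ 2) := by
    intro x₁
    set pA := ∑ y, P (x₁, y) with hpA
    set qA := ∑ y, Q (x₁, y) with hqA
    have hpA0 : 0 ≤ pA := Finset.sum_nonneg fun y _ => hP _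
    have hqA0 : 0 ≤ qA := Finset.sum_nonneg fun y _ => hQ _
    have hPfac : ∀ y, Real.sqrt (P (x₁, y))
        = Real.sqrt pA * Real.sqrt (P (x₁, y) / pA) := by
      intro y
      rcases eq_or_lt_of_le hpA0 with h | h
      · have hz : P (x₁, y) = 0 :=
          (Finset.sum_eq_zero_iff_of_nonneg (fun y _ => hP (x₁, y))).mp h.symm y
            (Finset.mem_univ y)
        simp [hz]
      · rw [← Real.sqrt_mul hpA0]
        congr 1
        field_simp
    have hQfac : ∀ y, Real.sqrt (Q (x₁, y))
        = Real.sqrt qA * Real.sqrt (Q (x₁, y) / qA) := by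
      intro y
      rcases eq_or_lt_of_le hqA0 with h | h
      · have hz : Q (x₁, y) = 0 :=
          (Finset.sum_eq_zero_iff_of_nonneg (fun y _ => hQ (x₁, y))).mp h.symm y
            (Finset.mem_univ y)
        simp [hz]
      · rw [← Real.sqrt_mul hqA0]
        congr 1
        field_simp
    have hqsum : ∑ y, Q (x₁, y) / qA ≤ 1 := by
      rcases eq_or_lt_of_le hqA0 with h | h
      · simp [← h]
      · rw [← Finset.sum_div, ← hqA, div_le_one h]
    have hy : ∀ y ∈ Finset.univ,
        (Real.sqrt (P (x₁, y)) - Real.sqrt (Q (x₁, y))) ^ 2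
          ≤ 2 * pA * (Real.sqrt (P (x₁, y) / pA) - Real.sqrt (Q (x₁, y) / qA)) ^ 2
            + 2 * (Real.sqrt pA - Real.sqrt qA) ^ 2 * (Q (x₁, y) / qA) := by
      intro y _
      rw [hPfac y, hQfac y]
      have h1 : Real.sqrt pA ^ 2 = pA := Real.sq_sqrt hpA0
      have h2 : Real.sqrt (Q (x₁, y) / qA) ^ 2 = Q (x₁, y) / qA :=
        Real.sq_sqrt (div_nonneg (hQ _) hqA0)
      nlinarith [sq_nonneg (Real.sqrt pA * (Real.sqrt (P (x₁, y) / pA)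
        - Real.sqrt (Q (x₁, y) / qA)) - (Real.sqrt pA - Real.sqrt qA)
        * Real.sqrt (Q (x₁, y) / qA))]
    calc ∑ y, (Real.sqrt (P (x₁, y)) - Real.sqrt (Q (x₁, y))) ^ 2
        ≤ ∑ y, (2 * pA * (Real.sqrt (P (x₁, y) / pA) - Real.sqrt (Q (x₁, y) / qA)) ^ 2
            + 2 * (Real.sqrt pA - Real.sqrt qA) ^ 2 * (Q (x₁, y) / qA)) :=
          Finset.sum_le_sum hy
      _ = 2 * pA * (∑ y, (Real.sqrt (P (x₁, y) / pA) - Real.sqrt (Q (x₁, y) / qA)) ^ 2)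
            + 2 * (Real.sqrt pA - Real.sqrt qA) ^ 2 * (∑ y, Q (x₁, y) / qA) := by
          rw [Finset.sum_add_distrib, ← Finset.mul_sum, ← Finset.mul_sum]
      _ ≤ 2 * (Real.sqrt pA - Real.sqrt qA) ^ 2
            + 2 * (pA * ∑ y, (Real.sqrt (P (x₁, y) / pA) - Real.sqrt (Q (x₁, y) / qA)) ^ 2) := by
          nlinarith [sq_nonneg (Real.sqrt pA - Real.sqrt qA)]
  calc ∑ z : X₁ × X₂, (Real.sqrt (P z) - Real.sqrt (Q z)) ^ 2
      = ∑ x₁, ∑ y, (Real.sqrt (P (x₁, y)) - Real.sqrt (Q (x₁, y))) ^ 2 :=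
        Fintype.sum_prod_type _
    _ ≤ ∑ x₁, (2 * (Real.sqrt (∑ y, P (x₁, y)) - Real.sqrt (∑ y, Q (x₁, y))) ^ 2
          + 2 * ((∑ y, P (x₁, y)) *
              ∑ x₂, (Real.sqrt (P (x₁, x₂) / ∑ y, P (x₁, y))
                     - Real.sqrt (Q (x₁, x₂) / ∑ y, Q (x₁, y))) ^ 2)) :=
        Finset.sum_le_sum fun x₁ _ => key x₁
    _ = _ := by rw [Finset.sum_add_distrib, Finset.mul_sum, Finset.mul_sum]
end

section
/- Let {(X_i, F_i)}_{i∈[n]} be finite measurable spaces, and let P and Q be the laws of a sequence (X_1,…,X_n) generated by probability kernels P^{(i)}(·|x_1,…,x_{i−1}) and Q^{(i)}(·|x_1,…,x_{i−1}) respectively. Then H²(P, Q) ≤ 100·log(n)·E_P[ Σ_{i=1}^n H²(P^{(i)}(·|X_1,…,X_{i−1}), Q^{(i)}(·|X_1,…,X_{i−1})) ] for n ≥ 2. -/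
/-!
Write `A_k = √(P_{<k} Q_{<k})` for the affinity of the first `k` steps, `P_{≥k}` for the
`P`-likelihood of the remaining ones and `h_k` for the one-step squared Hellinger distance.
Since `P_{≥k}` sums to one over the future, `Σ A_k P_{≥k} - Σ A_{k+1} P_{≥k+1} = Σ A_k h_k P_{≥k} / 2`,
and telescoping gives `H²(P, Q) = Σ_k Σ A_k h_k P_{≥k}`. As long as `Q_{<k} < 256 P_{<k}` we have
`A_k ≤ 16 P_{<k}`, so these terms contribute at most `16 E_P[Σ_k h_k]`. Let `τ` be the first `k`
with `Q_{<k} ≥ 256 P_{<k}`. Telescoping again from `τ`, the remaining terms are at most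
`2 E[A_τ P_{≥τ}] ≤ 2 √(P(τ < n)) √(Q(τ < n))` by Cauchy–Schwarz. Since `Q(τ < n) ≥ 256 P(τ < n)`
and `(√P(E) - √Q(E))² ≤ H²(P, Q)` for every event `E`, this is at most `(32/225) H²(P, Q)`, whence
`H²(P, Q) ≤ (3600/193) E_P[Σ_k h_k] ≤ 100 log 2 · E_P[Σ_k h_k]`.
-/

open Finset Function Real

section CoordinateSum

variable {ι : Type*} [Fintype ι] [DecidableEq ι] {X : ι → Type*} [∀ i, Fintype (X i)]

theorem Fintype.card_nsmul_sum_apply_self {M : Type*} [AddCommMonoid M] (m : ι)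
    (F : (∀ i, X i) → X m → M) (hF : ∀ x b, F (update x m b) = F x) :
    Fintype.card (X m) • ∑ x, F x (x m) = ∑ x, ∑ b, F x b := by
  let e : X m × (∀ i, X i) ≃ (∀ i, X i) × X m :=
    { toFun := fun p => (update p.2 m p.1, p.2 m)
      invFun := fun q => (q.1 m, update q.1 m q.2)
      left_inv := fun p => by simp
      right_inv := fun q => by simp }
  calc Fintype.card (X m) • ∑ x, F x (x m) = ∑ q : (∀ i, X i) × X m, F q.1 (q.1 m) := by
        simp [Fintype.sum_prod_type, Finset.smul_sum]
    _ = ∑ p : X m × (∀ i, X i), F (update p.2 m p.1) p.1 :=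
        (Fintype.sum_equiv e _ _ fun p => by simp [e]).symm
    _ = ∑ x, ∑ b, F x b := by simp [Fintype.sum_prod_type, hF, Finset.sum_comm (γ := X m)]

theorem Fintype.sum_apply_self_eq_div_card (m : ι)
    (F : (∀ i, X i) → X m → ℝ) (hF : ∀ x b, F (update x m b) = F x) :
    ∑ x, F x (x m) = (∑ x, ∑ b, F x b) / Fintype.card (X m) := by
  rcases isEmpty_or_nonempty (X m) with hm | hm
  · have : IsEmpty (∀ i, X i) := isEmpty_pi.mpr ⟨m, hm⟩
    simp
  · rw [eq_div_iff (by positivity), mul_comm, ← nsmul_eq_mul,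
      Fintype.card_nsmul_sum_apply_self m F hF]

end CoordinateSum

namespace Real

theorem sq_sqrt_sum_sub_sqrt_sum_le {ι : Type*} (s : Finset ι) {a b : ι → ℝ}
    (ha : ∀ i, 0 ≤ a i) (hb : ∀ i, 0 ≤ b i) :
    (√(∑ i ∈ s, a i) - √(∑ i ∈ s, b i)) ^ 2 ≤ ∑ i ∈ s, (√(a i) - √(b i)) ^ 2 := by
  have hcs := sum_sqrt_mul_sqrt_le s ha hb
  have hA := sq_sqrt (sum_nonneg fun i (_ : i ∈ s) => ha i)
  have hB := sq_sqrt (sum_nonneg fun i (_ : i ∈ s) => hb i)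
  have hterm : ∀ i, (√(a i) - √(b i)) ^ 2 = a i + b i - 2 * (√(a i) * √(b i)) := fun i => by
    rw [sub_sq, sq_sqrt (ha i), sq_sqrt (hb i)]; ring
  simp only [hterm, sum_sub_distrib, sum_add_distrib, ← mul_sum]
  nlinarith

theorem sum_sq_sqrt_sub_sqrt_eq_two_mul {ι : Type*} (s : Finset ι) {p q : ι → ℝ}
    (hp : ∀ i, 0 ≤ p i) (hq : ∀ i, 0 ≤ q i) (hpq : ∑ i ∈ s, p i = ∑ i ∈ s, q i) :
    ∑ i ∈ s, (√(p i) - √(q i)) ^ 2 = 2 * ∑ i ∈ s, (p i - √(p i * q i)) := by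
  have hterm : ∀ i, (√(p i) - √(q i)) ^ 2 = p i + q i - 2 * √(p i * q i) := fun i => by
    rw [sub_sq, sq_sqrt (hp i), sq_sqrt (hq i), sqrt_mul (hp i)]; ring
  simp only [hterm, sum_sub_distrib, sum_add_distrib, ← mul_sum, hpq]
  ring

end Real

namespace SequentialHellinger

variable {n : ℕ} {X : Fin n → Type*}

def DependsBefore {β : Type*} (k : ℕ) (g : ((j : Fin n) → X j) → β) : Prop :=
  ∀ x y, (∀ j : Fin n, (j : ℕ) < k → x j = y j) → g x = g y

theorem DependsBefore.mono {β : Type*} {k l : ℕ} (hkl : k ≤ l) {g : ((j : Fin n) → X j) → β}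
    (hg : DependsBefore k g) : DependsBefore l g :=
  fun x y h => hg x y fun j hj => h j (hj.trans_le hkl)

theorem DependsBefore.update_eq {β : Type*} {i : Fin n} {g : ((j : Fin n) → X j) → β}
    (hg : DependsBefore i g) (x : (j : Fin n) → X j) (b : X i) : g (update x i b) = g x :=
  hg _ _ fun _ hj => update_of_ne (fun h => hj.ne (congrArg Fin.val h)) _ _

theorem DependsBefore.apply_self {β : Type*} {i : Fin n} {F : ((j : Fin n) → X j) → X i → β}
    (hF : DependsBefore i F) : DependsBefore (i + 1) fun x => F x (x i) := by
  intro x y h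
  change F x (x i) = F y (y i)
  rw [hF x y fun j hj => h j (Nat.lt_succ_of_lt hj), h i (Nat.lt_succ_self _)]

section Likelihood

variable (K P Q : (i : Fin n) → ((j : Fin n) → X j) → X i → ℝ)

-- Indexed by `ℕ` and equal to `1` from `n` on, so that the likelihood of a segment of steps is a
-- product over an interval of `ℕ`.
def stepLik (x : (j : Fin n) → X j) (k : ℕ) : ℝ :=
  if h : k < n then K ⟨k, h⟩ x (x ⟨k, h⟩) else 1

def prefixLik (k : ℕ) (x : (j : Fin n) → X j) : ℝ := ∏ i ∈ range k, stepLik K x i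

def suffixLik (k : ℕ) (x : (j : Fin n) → X j) : ℝ := ∏ i ∈ Ico k n, stepLik K x i

noncomputable def affinity (k : ℕ) (x : (j : Fin n) → X j) : ℝ := √(prefixLik P k x * prefixLik Q k x)

abbrev PrefixRatioLarge (k : ℕ) (x : (j : Fin n) → X j) : Prop := 256 * prefixLik P k x ≤ prefixLik Q k x

noncomputable def hittingTime (x : (j : Fin n) → X j) : ℕ :=
  Nat.find (⟨n, Or.inr le_rfl⟩ : ∃ k, PrefixRatioLarge P Q k x ∨ n ≤ k)

noncomputable def hitIndicator (m : ℕ) (x : (j : Fin n) → X j) : ℝ :=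
  if hittingTime P Q x = m then 1 else 0

variable {K P Q}

theorem stepLik_of_lt (x : (j : Fin n) → X j) {k : ℕ} (hk : k < n) :
    stepLik K x k = K ⟨k, hk⟩ x (x ⟨k, hk⟩) := dif_pos hk

theorem prod_eq_prefixLik (x : (j : Fin n) → X j) : ∏ i, K i x (x i) = prefixLik K n x := by
  rw [prefixLik, ← Fin.prod_univ_eq_prod_range]
  exact prod_congr rfl fun i _ => (stepLik_of_lt x i.isLt).symm

theorem prefixLik_succ (i : Fin n) (x : (j : Fin n) → X j) :
    prefixLik K (i + 1) x = prefixLik K i x * K i x (x i) := by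
  rw [prefixLik, prod_range_succ, stepLik_of_lt x i.isLt]; rfl

theorem prefixLik_mul_suffixLik {k : ℕ} (hk : k ≤ n) (x : (j : Fin n) → X j) :
    prefixLik K k x * suffixLik K k x = ∏ i, K i x (x i) := by
  rw [prod_eq_prefixLik]
  exact prod_range_mul_prod_Ico _ hk

theorem suffixLik_zero (x : (j : Fin n) → X j) : suffixLik K 0 x = ∏ i, K i x (x i) := by
  simpa [prefixLik] using prefixLik_mul_suffixLik (K := K) (Nat.zero_le n) x

@[simp] theorem suffixLik_self (x : (j : Fin n) → X j) : suffixLik K n x = 1 := by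
  simp [suffixLik]

theorem suffixLik_eq_mul (i : Fin n) (x : (j : Fin n) → X j) :
    suffixLik K i x = K i x (x i) * suffixLik K (i + 1) x := by
  rw [suffixLik, prod_eq_prod_Ico_succ_bot i.isLt, stepLik_of_lt x i.isLt]; rfl

@[simp] theorem affinity_zero (x : (j : Fin n) → X j) : affinity P Q 0 x = 1 := by
  simp [affinity, prefixLik]

theorem affinity_self (x : (j : Fin n) → X j) :
    affinity P Q n x = √((∏ i, P i x (x i)) * ∏ i, Q i x (x i)) := by
  rw [affinity, prod_eq_prefixLik, prod_eq_prefixLik]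

theorem hittingTime_le_of_prefixRatioLarge {k : ℕ} {x : (j : Fin n) → X j} (h : PrefixRatioLarge P Q k x) :
    hittingTime P Q x ≤ k :=
  Nat.find_min' _ (Or.inl h)

theorem prefixRatioLarge_hittingTime {x : (j : Fin n) → X j} (h : hittingTime P Q x < n) :
    PrefixRatioLarge P Q (hittingTime P Q x) x :=
  (Nat.find_spec (⟨n, Or.inr le_rfl⟩ : ∃ k, PrefixRatioLarge P Q k x ∨ n ≤ k)).resolve_right
    (not_le.mpr h)

theorem hitIndicator_nonneg (m : ℕ) (x : (j : Fin n) → X j) : 0 ≤ hitIndicator P Q m x := by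
  unfold hitIndicator; split_ifs <;> norm_num

end Likelihood

variable [∀ i, Fintype (X i)] {K P Q : (i : Fin n) → ((j : Fin n) → X j) → X i → ℝ}

structure IsSequentialKernel (K : (i : Fin n) → ((j : Fin n) → X j) → X i → ℝ) : Prop where
  nonneg : ∀ i x a, 0 ≤ K i x a
  sum_eq_one : ∀ i x, ∑ a, K i x a = 1
  dependsBefore : ∀ i : Fin n, DependsBefore i (K i)

variable (X) in
def suffixCard (k : ℕ) : ℝ :=
  ∏ i ∈ Ico k n, if h : i < n then (Fintype.card (X ⟨i, h⟩) : ℝ) else 1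

@[simp] theorem suffixCard_self : suffixCard X n = 1 := by simp [suffixCard]

theorem suffixCard_eq_mul (i : Fin n) :
    suffixCard X i = Fintype.card (X i) * suffixCard X (i + 1) := by
  rw [suffixCard, prod_eq_prod_Ico_succ_bot i.isLt, dif_pos i.isLt]; rfl

variable (P Q) in
noncomputable def stepHellinger (x : (j : Fin n) → X j) (k : ℕ) : ℝ :=
  if h : k < n then ∑ b, (√(P ⟨k, h⟩ x b) - √(Q ⟨k, h⟩ x b)) ^ 2 else 0

theorem stepHellinger_of_lt (x : (j : Fin n) → X j) (i : Fin n) :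
    stepHellinger P Q x i = ∑ b, (√(P i x b) - √(Q i x b)) ^ 2 := dif_pos i.isLt

theorem stepHellinger_nonneg (x : (j : Fin n) → X j) (k : ℕ) : 0 ≤ stepHellinger P Q x k := by
  unfold stepHellinger; split_ifs
  · exact sum_nonneg fun _ _ => sq_nonneg _
  · exact le_rfl

theorem sum_range_stepHellinger (x : (j : Fin n) → X j) :
    ∑ k ∈ range n, stepHellinger P Q x k = ∑ i, ∑ a, (√(P i x a) - √(Q i x a)) ^ 2 := by
  rw [← Fin.sum_univ_eq_sum_range]
  exact sum_congr rfl fun i _ => stepHellinger_of_lt x i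

namespace IsSequentialKernel

variable (hK : IsSequentialKernel K)
include hK

theorem stepLik_nonneg (x : (j : Fin n) → X j) (k : ℕ) : 0 ≤ stepLik K x k := by
  unfold stepLik; split_ifs
  · exact hK.nonneg _ _ _
  · exact zero_le_one

theorem prefixLik_nonneg (k : ℕ) (x : (j : Fin n) → X j) : 0 ≤ prefixLik K k x :=
  prod_nonneg fun i _ => hK.stepLik_nonneg x i

theorem suffixLik_nonneg (k : ℕ) (x : (j : Fin n) → X j) : 0 ≤ suffixLik K k x :=
  prod_nonneg fun i _ => hK.stepLik_nonneg x i

theorem dependsBefore_prefixLik (k : ℕ) : DependsBefore k (prefixLik K k) := by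
  intro x y h
  refine prod_congr rfl fun i hi => ?_
  have hik : i < k := mem_range.mp hi
  unfold stepLik
  split_ifs with hin
  · rw [hK.dependsBefore ⟨i, hin⟩ x y fun j hj => h j (hj.trans hik), h _ hik]
  · rfl

-- The sum over whole trajectories counts every history `suffixCard X k` times, once for each
-- continuation, and the likelihood of the continuations sums to one.
theorem sum_mul_suffixLik {k : ℕ} (hk : k ≤ n) {g : ((j : Fin n) → X j) → ℝ}
    (hg : DependsBefore k g) : ∑ x, g x * suffixLik K k x = (∑ x, g x) / suffixCard X k := by
  induction hk using Nat.decreasingInduction generalizing g with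
  | self => simp
  | of_succ k hk ih =>
    let i : Fin n := ⟨k, hk⟩
    have hgK : DependsBefore (k + 1) fun x => g x * K i x (x i) := by
      intro x y h
      change g x * K i x (x i) = g y * K i y (y i)
      rw [hg x y fun j hj => h j (Nat.lt_succ_of_lt hj)]
      exact congrArg _ ((hK.dependsBefore i).apply_self x y h)
    have hmarg : ∑ x, g x * K i x (x i) = (∑ x, g x) / Fintype.card (X i) := by
      rw [Fintype.sum_apply_self_eq_div_card i (fun x b => g x * K i x b)
        fun x b => by rw [hg.update_eq (i := i), (hK.dependsBefore i).update_eq]]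
      simp [← mul_sum, hK.sum_eq_one]
    calc ∑ x, g x * suffixLik K k x = ∑ x, g x * K i x (x i) * suffixLik K (k + 1) x := by
          refine sum_congr rfl fun x _ => ?_
          rw [show suffixLik K k x = _ from suffixLik_eq_mul i x, mul_assoc]
      _ = (∑ x, g x) / suffixCard X k := by
          rw [ih hgK, hmarg, div_div, show suffixCard X k = _ from suffixCard_eq_mul i]

theorem sum_apply_mul_suffixLik_congr (i : Fin n)
    {F G : ((j : Fin n) → X j) → X i → ℝ} (hF : DependsBefore i F) (hG : DependsBefore i G)
    (hFG : ∀ x, ∑ b, F x b = ∑ b, G x b) :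
    ∑ x, F x (x i) * suffixLik K (i + 1) x = ∑ x, G x (x i) * suffixLik K (i + 1) x := by
  rw [hK.sum_mul_suffixLik i.isLt hF.apply_self, hK.sum_mul_suffixLik i.isLt hG.apply_self,
    Fintype.sum_apply_self_eq_div_card i F hF.update_eq,
    Fintype.sum_apply_self_eq_div_card i G hG.update_eq, sum_congr rfl fun x _ => hFG x]

end IsSequentialKernel

theorem IsSequentialKernel.sum_mul_suffixLik_eq (hP : IsSequentialKernel P) (hQ : IsSequentialKernel Q) {k : ℕ}
    (hk : k ≤ n) {g : ((j : Fin n) → X j) → ℝ} (hg : DependsBefore k g) :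
    ∑ x, g x * suffixLik P k x = ∑ x, g x * suffixLik Q k x := by
  rw [hP.sum_mul_suffixLik hk hg, hQ.sum_mul_suffixLik hk hg]

theorem affinity_succ (hP : IsSequentialKernel P) (hQ : IsSequentialKernel Q) (i : Fin n)
    (x : (j : Fin n) → X j) :
    affinity P Q (i + 1) x = affinity P Q i x * √(P i x (x i) * Q i x (x i)) := by
  rw [affinity, affinity, prefixLik_succ, prefixLik_succ, ← sqrt_mul
    (mul_nonneg (hP.prefixLik_nonneg i x) (hQ.prefixLik_nonneg i x))]
  ring_nf

theorem dependsBefore_affinity (hP : IsSequentialKernel P) (hQ : IsSequentialKernel Q) (k : ℕ) :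
    DependsBefore k (affinity P Q k) := fun x y h => by
  rw [affinity, affinity, hP.dependsBefore_prefixLik k x y h, hQ.dependsBefore_prefixLik k x y h]

theorem dependsBefore_stepHellinger (hP : IsSequentialKernel P) (hQ : IsSequentialKernel Q) (i : Fin n) :
    DependsBefore i (stepHellinger P Q · i) := fun x y h => by
  simp only [stepHellinger_of_lt, hP.dependsBefore i x y h, hQ.dependsBefore i x y h]

theorem two_mul_sub_eq_sum_mul_stepHellinger (hP : IsSequentialKernel P) (hQ : IsSequentialKernel Q)
    (i : Fin n) {g : ((j : Fin n) → X j) → ℝ} (hg : DependsBefore i g) :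
    2 * (∑ x, g x * affinity P Q i x * suffixLik P i x
        - ∑ x, g x * affinity P Q (i + 1) x * suffixLik P (i + 1) x)
      = ∑ x, g x * affinity P Q i x * stepHellinger P Q x i * suffixLik P i x := by
  have hA := dependsBefore_affinity hP hQ i
  have hd := dependsBefore_stepHellinger hP hQ i
  have hsum : ∀ x, ∑ b, 2 * (g x * affinity P Q i x * (P i x b - √(P i x b * Q i x b)))
      = ∑ b, g x * affinity P Q i x * stepHellinger P Q x i * P i x b := fun x => by
    rw [← mul_sum, ← mul_sum, ← mul_sum, hP.sum_eq_one, stepHellinger_of_lt,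
      sum_sq_sqrt_sub_sqrt_eq_two_mul univ (hP.nonneg i x) (hQ.nonneg i x)
        (by rw [hP.sum_eq_one, hQ.sum_eq_one])]
    ring
  calc _ = ∑ x, 2 * (g x * affinity P Q i x * (P i x (x i) - √(P i x (x i) * Q i x (x i))))
          * suffixLik P (i + 1) x := by
        rw [← sum_sub_distrib, mul_sum]
        refine sum_congr rfl fun x _ => ?_
        rw [suffixLik_eq_mul, affinity_succ hP hQ]
        ring
    _ = ∑ x, g x * affinity P Q i x * stepHellinger P Q x i * P i x (x i)
          * suffixLik P (i + 1) x :=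
        hP.sum_apply_mul_suffixLik_congr i
          (F := fun x b => 2 * (g x * affinity P Q i x * (P i x b - √(P i x b * Q i x b))))
          (G := fun x b => g x * affinity P Q i x * stepHellinger P Q x i * P i x b)
          (fun x y h => by simp only [hg x y h, hA x y h, hP.dependsBefore i x y h,
            hQ.dependsBefore i x y h])
          (fun x y h => by simp only [hg x y h, hA x y h, hd x y h, hP.dependsBefore i x y h])
          hsum
    _ = _ := sum_congr rfl fun x _ => by rw [suffixLik_eq_mul]; ring

theorem two_mul_sub_eq_sum_Ico (hP : IsSequentialKernel P) (hQ : IsSequentialKernel Q) {m : ℕ} (hm : m ≤ n)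
    {g : ((j : Fin n) → X j) → ℝ} (hg : DependsBefore m g) :
    2 * (∑ x, g x * affinity P Q m x * suffixLik P m x - ∑ x, g x * affinity P Q n x)
      = ∑ k ∈ Ico m n, ∑ x, g x * affinity P Q k x * stepHellinger P Q x k * suffixLik P k x := by
  let T k := ∑ x, g x * affinity P Q k x * suffixLik P k x
  have hT : ∑ k ∈ Ico m n, 2 * (T k - T (k + 1)) = 2 * (T m - T n) := by
    rw [← mul_sum, ← neg_sub (T n), ← sum_Ico_sub T hm, ← sum_neg_distrib]
    simp only [neg_sub]
  rw [show ∑ x, g x * affinity P Q n x = T n by simp [T], ← hT]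
  exact sum_congr rfl fun k hk => two_mul_sub_eq_sum_mul_stepHellinger hP hQ
    ⟨k, (mem_Ico.mp hk).2⟩ (hg.mono (mem_Ico.mp hk).1)

theorem sum_sq_sqrt_sub_sqrt_eq_sum_affinity (hP : IsSequentialKernel P) (hQ : IsSequentialKernel Q) :
    ∑ x, (√(∏ i, P i x (x i)) - √(∏ i, Q i x (x i))) ^ 2
      = ∑ k ∈ range n, ∑ x, affinity P Q k x * stepHellinger P Q x k * suffixLik P k x := by
  have hsum : ∑ x, ∏ i, P i x (x i) = ∑ x, ∏ i, Q i x (x i) := by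
    have h := hP.sum_mul_suffixLik_eq hQ (Nat.zero_le n) (g := fun _ => 1) fun _ _ _ => rfl
    simpa only [one_mul, suffixLik_zero] using h
  rw [sum_sq_sqrt_sub_sqrt_eq_two_mul univ (fun x => prod_nonneg fun i _ => hP.nonneg i x _)
    (fun x => prod_nonneg fun i _ => hQ.nonneg i x _) hsum, range_eq_Ico]
  have h := two_mul_sub_eq_sum_Ico hP hQ (Nat.zero_le n) (g := fun _ => 1) fun _ _ _ => rfl
  simp only [one_mul, affinity_zero, suffixLik_zero, affinity_self] at h
  rw [← h, sum_sub_distrib]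

theorem sum_mul_prefixLik_mul_suffixLik (hP : IsSequentialKernel P) (hQ : IsSequentialKernel Q) {m : ℕ}
    (hm : m ≤ n) {g : ((j : Fin n) → X j) → ℝ} (hg : DependsBefore m g) :
    ∑ x, g x * (prefixLik Q m x * suffixLik P m x) = ∑ x, g x * ∏ i, Q i x (x i) := by
  have hgQ : DependsBefore m fun x => g x * prefixLik Q m x := fun x y h => by
    simp only [hg x y h, hQ.dependsBefore_prefixLik m x y h]
  simp_rw [← prefixLik_mul_suffixLik hm, ← mul_assoc]
  exact hP.sum_mul_suffixLik_eq hQ hm hgQ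

theorem dependsBefore_hitIndicator (hP : IsSequentialKernel P) (hQ : IsSequentialKernel Q) (m : ℕ) :
    DependsBefore m (hitIndicator P Q m) := by
  intro x y h
  have hE : ∀ j ≤ m, PrefixRatioLarge P Q j x ↔ PrefixRatioLarge P Q j y := fun j hj => by
    have hj : ∀ i : Fin n, (i : ℕ) < j → x i = y i := fun i hi => h i (hi.trans_le hj)
    rw [PrefixRatioLarge, PrefixRatioLarge, hP.dependsBefore_prefixLik j x y hj, hQ.dependsBefore_prefixLik j x y hj]
  have hτ : hittingTime P Q x = m ↔ hittingTime P Q y = m := by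
    rw [hittingTime, hittingTime, Nat.find_eq_iff, Nat.find_eq_iff, hE m le_rfl]
    exact and_congr_right' (forall₂_congr fun j hj => by rw [hE j hj.le])
  simp only [hitIndicator, hτ]

theorem affinity_le_of_not_prefixRatioLarge (hP : IsSequentialKernel P) {k : ℕ} {x : (j : Fin n) → X j}
    (h : ¬PrefixRatioLarge P Q k x) : affinity P Q k x ≤ 16 * prefixLik P k x := by
  have hp := hP.prefixLik_nonneg k x
  rw [affinity, sqrt_le_iff]
  constructor
  · positivity
  · nlinarith [not_le.mp h]

theorem affinity_mul_le (hP : IsSequentialKernel P) {k : ℕ} (hk : k ≤ n) (x : (j : Fin n) → X j) :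
    affinity P Q k x * stepHellinger P Q x k * suffixLik P k x
      ≤ (if hittingTime P Q x ≤ k then
          affinity P Q k x * stepHellinger P Q x k * suffixLik P k x else 0)
        + 16 * ((∏ i, P i x (x i)) * stepHellinger P Q x k) := by
  have hd := stepHellinger_nonneg (P := P) (Q := Q) x k
  have hs := hP.suffixLik_nonneg k x
  split_ifs with hτ
  · exact le_add_of_nonneg_right
      (mul_nonneg (by norm_num) (mul_nonneg (prod_nonneg fun i _ => hP.nonneg i x _) hd))
  · have hA := affinity_le_of_not_prefixRatioLarge hP fun he => hτ (hittingTime_le_of_prefixRatioLarge he)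
    rw [zero_add, ← prefixLik_mul_suffixLik hk]
    calc affinity P Q k x * stepHellinger P Q x k * suffixLik P k x
        = affinity P Q k x * (stepHellinger P Q x k * suffixLik P k x) := by ring
      _ ≤ 16 * prefixLik P k x * (stepHellinger P Q x k * suffixLik P k x) :=
        mul_le_mul_of_nonneg_right hA (mul_nonneg hd hs)
      _ = _ := by ring

theorem sum_range_sum_hitIndicator_mul (f : ((j : Fin n) → X j) → ℝ) :
    ∑ m ∈ range n, ∑ x, hitIndicator P Q m x * f x
      = ∑ x ∈ univ.filter (hittingTime P Q · < n), f x := by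
  rw [sum_comm, sum_filter]
  simp [hitIndicator, ite_mul, sum_ite_eq]

theorem sum_ite_le_two_mul_sum_hitIndicator (hP : IsSequentialKernel P) (hQ : IsSequentialKernel Q) :
    ∑ k ∈ range n, ∑ x, (if hittingTime P Q x ≤ k then
        affinity P Q k x * stepHellinger P Q x k * suffixLik P k x else 0)
      ≤ 2 * ∑ m ∈ range n, ∑ x, hitIndicator P Q m x * affinity P Q m x * suffixLik P m x := by
  calc _ = ∑ k ∈ range n, ∑ m ∈ range (k + 1), ∑ x, hitIndicator P Q m x * affinity P Q k x
          * stepHellinger P Q x k * suffixLik P k x := by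
        refine sum_congr rfl fun k _ => ?_
        rw [sum_comm]
        refine sum_congr rfl fun x _ => ?_
        simp [hitIndicator, ite_mul, sum_ite_eq]
    _ = ∑ m ∈ range n, ∑ k ∈ Ico m n, ∑ x, hitIndicator P Q m x * affinity P Q k x
          * stepHellinger P Q x k * suffixLik P k x :=
        sum_comm' fun k m => by simp only [mem_range, mem_Ico]; omega
    _ = ∑ m ∈ range n, 2 * (∑ x, hitIndicator P Q m x * affinity P Q m x * suffixLik P m x
          - ∑ x, hitIndicator P Q m x * affinity P Q n x) :=
        sum_congr rfl fun m hm => (two_mul_sub_eq_sum_Ico hP hQ (mem_range.mp hm).le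
          (dependsBefore_hitIndicator hP hQ m)).symm
    _ ≤ _ := by
        rw [mul_sum]
        refine sum_le_sum fun m _ => mul_le_mul_of_nonneg_left (sub_le_self _ ?_) zero_le_two
        exact sum_nonneg fun x _ => mul_nonneg (hitIndicator_nonneg m x) (sqrt_nonneg _)

theorem sum_hitIndicator_mul_le_sqrt_mul_sqrt (hP : IsSequentialKernel P) (hQ : IsSequentialKernel Q) :
    ∑ m ∈ range n, ∑ x, hitIndicator P Q m x * affinity P Q m x * suffixLik P m x
      ≤ √(∑ m ∈ range n, ∑ x, hitIndicator P Q m x * ∏ i, P i x (x i))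
        * √(∑ m ∈ range n, ∑ x, hitIndicator P Q m x * ∏ i, Q i x (x i)) := by
  let f (K : (i : Fin n) → ((j : Fin n) → X j) → X i → ℝ) (m : ℕ) (x : (j : Fin n) → X j) :=
    hitIndicator P Q m x * (prefixLik K m x * suffixLik P m x)
  have hf : ∀ K, IsSequentialKernel K → ∀ m x, 0 ≤ f K m x := fun K hK m x =>
    mul_nonneg (hitIndicator_nonneg m x)
      (mul_nonneg (hK.prefixLik_nonneg m x) (hP.suffixLik_nonneg m x))
  have hterm : ∀ m x, hitIndicator P Q m x * affinity P Q m x * suffixLik P m x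
      = √(f P m x) * √(f Q m x) := fun m x => by
    unfold f hitIndicator
    split_ifs
    · have hs := hP.suffixLik_nonneg m x
      rw [one_mul, one_mul, one_mul, ← sqrt_mul (mul_nonneg (hP.prefixLik_nonneg m x) hs),
        show ∀ a b c : ℝ, a * c * (b * c) = a * b * c ^ 2 from fun a b c => by ring,
        sqrt_mul (mul_nonneg (hP.prefixLik_nonneg m x) (hQ.prefixLik_nonneg m x)), sqrt_sq hs,
        affinity]
    · simp
  calc _ = ∑ m ∈ range n, ∑ x, √(f P m x) * √(f Q m x) := by simp only [hterm]
    _ ≤ ∑ m ∈ range n, √(∑ x, f P m x) * √(∑ x, f Q m x) :=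
        sum_le_sum fun m _ => sum_sqrt_mul_sqrt_le _ (hf P hP m) (hf Q hQ m)
    _ ≤ √(∑ m ∈ range n, ∑ x, f P m x) * √(∑ m ∈ range n, ∑ x, f Q m x) :=
        sum_sqrt_mul_sqrt_le _ (fun m => sum_nonneg fun x _ => hf P hP m x)
          (fun m => sum_nonneg fun x _ => hf Q hQ m x)
    _ = _ := by
        congr 2 <;> refine sum_congr rfl fun m hm => ?_
        · simp only [f, prefixLik_mul_suffixLik (mem_range.mp hm).le]
        · exact sum_mul_prefixLik_mul_suffixLik hP hQ (mem_range.mp hm).le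
            (dependsBefore_hitIndicator hP hQ m)

theorem sum_hitIndicator_mul_prod_le (hP : IsSequentialKernel P) (hQ : IsSequentialKernel Q) :
    256 * ∑ m ∈ range n, ∑ x, hitIndicator P Q m x * ∏ i, P i x (x i)
      ≤ ∑ m ∈ range n, ∑ x, hitIndicator P Q m x * ∏ i, Q i x (x i) := by
  rw [mul_sum]
  refine sum_le_sum fun m hm => ?_
  have hm := (mem_range.mp hm)
  rw [← sum_mul_prefixLik_mul_suffixLik hP hQ hm.le (dependsBefore_hitIndicator hP hQ m),
    mul_sum]
  refine sum_le_sum fun x _ => ?_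
  unfold hitIndicator
  split_ifs with hτ
  · have hE := prefixRatioLarge_hittingTime (hτ ▸ hm : hittingTime P Q x < n)
    rw [hτ] at hE
    rw [← prefixLik_mul_suffixLik hm.le]
    nlinarith [hP.suffixLik_nonneg m x]
  · simp

-- `b - a ≥ 15 b / 16` gives `b² ≤ (256 / 225) S`, hence `2 a b ≤ b² / 8 ≤ (32 / 225) S`.
theorem le_of_le_add_two_mul_of_sq_sub_le {S D a b : ℝ} (ha : 0 ≤ a) (hab : 16 * a ≤ b)
    (hS : S ≤ 16 * D + 2 * (a * b)) (hba : (a - b) ^ 2 ≤ S) : S ≤ 3600 / 193 * D := by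
  nlinarith [mul_le_mul_of_nonneg_right hab (by linarith : 0 ≤ b)]

theorem sum_sq_sqrt_sub_sqrt_le (hP : IsSequentialKernel P) (hQ : IsSequentialKernel Q) :
    ∑ x, (√(∏ i, P i x (x i)) - √(∏ i, Q i x (x i))) ^ 2
      ≤ 3600 / 193 * ∑ x, (∏ i, P i x (x i)) * ∑ i, ∑ a, (√(P i x a) - √(Q i x a)) ^ 2 := by
  set PA := ∑ m ∈ range n, ∑ x, hitIndicator P Q m x * ∏ i, P i x (x i)
  set QA := ∑ m ∈ range n, ∑ x, hitIndicator P Q m x * ∏ i, Q i x (x i)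
  have hP0 : ∀ x, 0 ≤ ∏ i, P i x (x i) := fun x => prod_nonneg fun i _ => hP.nonneg i x _
  have hQ0 : ∀ x, 0 ≤ ∏ i, Q i x (x i) := fun x => prod_nonneg fun i _ => hQ.nonneg i x _
  have hsplit := calc
    ∑ x, (√(∏ i, P i x (x i)) - √(∏ i, Q i x (x i))) ^ 2
      = ∑ k ∈ range n, ∑ x, affinity P Q k x * stepHellinger P Q x k * suffixLik P k x :=
        sum_sq_sqrt_sub_sqrt_eq_sum_affinity hP hQ
    _ ≤ ∑ k ∈ range n, ∑ x, ((if hittingTime P Q x ≤ k then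
          affinity P Q k x * stepHellinger P Q x k * suffixLik P k x else 0)
        + 16 * ((∏ i, P i x (x i)) * stepHellinger P Q x k)) :=
        sum_le_sum fun k hk => sum_le_sum fun x _ => affinity_mul_le hP (mem_range.mp hk).le x
    _ = ∑ k ∈ range n, ∑ x, (if hittingTime P Q x ≤ k then
          affinity P Q k x * stepHellinger P Q x k * suffixLik P k x else 0)
        + 16 * ∑ x, (∏ i, P i x (x i)) * ∑ i, ∑ a, (√(P i x a) - √(Q i x a)) ^ 2 := by
        simp only [sum_add_distrib]
        congr 1
        rw [sum_comm]
        simp only [← mul_sum, sum_range_stepHellinger]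
    _ ≤ 16 * ∑ x, (∏ i, P i x (x i)) * ∑ i, ∑ a, (√(P i x a) - √(Q i x a)) ^ 2
        + 2 * (√PA * √QA) := by
        linarith [sum_ite_le_two_mul_sum_hitIndicator hP hQ,
          sum_hitIndicator_mul_le_sqrt_mul_sqrt hP hQ]
  have hratio : 16 * √PA ≤ √QA := by
    have hPA : 0 ≤ PA := sum_nonneg fun m _ => sum_nonneg fun x _ =>
      mul_nonneg (hitIndicator_nonneg m x) (hP0 x)
    have hQA := sum_hitIndicator_mul_prod_le hP hQ
    rw [le_sqrt (by positivity) (by linarith), mul_pow, sq_sqrt hPA]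
    linarith
  have hdp : (√PA - √QA) ^ 2 ≤ ∑ x, (√(∏ i, P i x (x i)) - √(∏ i, Q i x (x i))) ^ 2 := by
    simp only [PA, QA, sum_range_sum_hitIndicator_mul]
    exact (sq_sqrt_sum_sub_sqrt_sum_le _ hP0 hQ0).trans
      (sum_le_sum_of_subset_of_nonneg (filter_subset _ _) fun _ _ _ => sq_nonneg _)
  exact le_of_le_add_two_mul_of_sq_sub_le (sqrt_nonneg _) hratio hsplit hdp

end SequentialHellinger

theorem hellinger_subadditivity_sequential
    (n : ℕ) (hn : 2 ≤ n) (X : Fin n → Type*) [∀ i, Fintype (X i)]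
    (Pk Qk : (i : Fin n) → ((j : Fin n) → X j) → X i → ℝ)
    -- each kernel is a pmf given any history
    (hPk0 : ∀ i x a, 0 ≤ Pk i x a) (hQk0 : ∀ i x a, 0 ≤ Qk i x a)
    (hPk1 : ∀ i x, ∑ a, Pk i x a = 1) (hQk1 : ∀ i x, ∑ a, Qk i x a = 1)
    -- each kernel depends only on the strict past (X_1, …, X_{i-1})
    (hPdep : ∀ i (x y : (j : Fin n) → X j), (∀ j, j < i → x j = y j) → Pk i x = Pk i y)
    (hQdep : ∀ i (x y : (j : Fin n) → X j), (∀ j, j < i → x j = y j) → Qk i x = Qk i y) :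
    ∑ x : (j : Fin n) → X j,
        (Real.sqrt (∏ i, Pk i x (x i)) - Real.sqrt (∏ i, Qk i x (x i))) ^ 2
      ≤ 100 * Real.log n *
          ∑ x : (j : Fin n) → X j, (∏ i, Pk i x (x i)) *
            ∑ i, ∑ a, (Real.sqrt (Pk i x a) - Real.sqrt (Qk i x a)) ^ 2 := by
  have hlog : 3600 / 193 ≤ 100 * Real.log n := by
    have := log_le_log two_pos (Nat.ofNat_le_cast.mpr hn)
    linarith [log_two_gt_d9]
  refine (SequentialHellinger.sum_sq_sqrt_sub_sqrt_le ⟨hPk0, hPk1, hPdep⟩ ⟨hQk0, hQk1, hQdep⟩).trans ?_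
  gcongr
  exact sum_nonneg fun x _ => mul_nonneg (prod_nonneg fun i _ => hPk0 i x _)
    (sum_nonneg fun i _ => sum_nonneg fun a _ => sq_nonneg _)
end
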